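/- Let R be a G-graded unital ring. Then R is G-controlled if and only if (a) every R_g is a simple R_e-bimodule, and (b) R_g ≅ R_h as R_e-bimodules if and only if g = h. -/

import Mathlib

open DirectSum Pointwise

namespace Controlled

variable {G R : Type*} [AddGroup G] [DecidableEq G] [Ring R]

/-- `P` is an `R_e`-sub-bimodule of `R` (w.r.t. the grading `𝒜`, written additively,
so `R_e = 𝒜 0`). -/
def IsSubBimodule (𝒜 : G → AddSubgroup R) (P : AddSubgroup R) : Prop :=
  ∀ a ∈ 𝒜 0, ∀ x ∈ P, a * x ∈ P ∧ x * a ∈ P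

/-- The `R_e`-bimodule `R_H = ⊕_{h ∈ H} R_h` (internally, the subgroup generated by
the `R_h`, `h ∈ H`; the sum is automatically direct). `R_∅ = ⊥ = {0}`. -/
def RH (𝒜 : G → AddSubgroup R) (H : Set G) : AddSubgroup R := ⨆ h ∈ H, 𝒜 h

/-- An `R_e`-bimodule isomorphism between additive subgroups `P` and `Q` of `R`:
an additive equivalence compatible with left and right multiplication by `R_e = 𝒜 0`. -/
structure BimodIso (𝒜 : G → AddSubgroup R) (P Q : AddSubgroup R) where
  toEquiv : P ≃+ Q
  map_left : ∀ (a x : R), a ∈ 𝒜 0 → ∀ (hx : x ∈ P) (hax : a * x ∈ P),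
    (toEquiv ⟨a * x, hax⟩ : R) = a * (toEquiv ⟨x, hx⟩ : R)
  map_right : ∀ (a x : R), a ∈ 𝒜 0 → ∀ (hx : x ∈ P) (hxa : x * a ∈ P),
    (toEquiv ⟨x * a, hxa⟩ : R) = (toEquiv ⟨x, hx⟩ : R) * a

/-- `R` is `G`-controlled: `H ↦ R_H` is a bijection from subsets of `G` onto the
`R_e`-sub-bimodules of `R`, and `R_S ≅ R_T` (as `R_e`-bimodules) iff `S = T`. -/
def IsControlled (𝒜 : G → AddSubgroup R) : Prop :=
  (∀ H : Set G, IsSubBimodule 𝒜 (RH 𝒜 H)) ∧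
  Function.Injective (RH 𝒜) ∧
  (∀ P : AddSubgroup R, IsSubBimodule 𝒜 P → ∃ H : Set G, RH 𝒜 H = P) ∧
  (∀ S T : Set G, Nonempty (BimodIso 𝒜 (RH 𝒜 S) (RH 𝒜 T)) ↔ S = T)

/-- `P` is a (nonzero) simple `R_e`-bimodule contained in `R`. -/
def IsSimpleBimod (𝒜 : G → AddSubgroup R) (P : AddSubgroup R) : Prop :=
  P ≠ ⊥ ∧ ∀ Q : AddSubgroup R, Q ≤ P → IsSubBimodule 𝒜 Q → Q = ⊥ ∨ Q = P

/-- The product `AB` of two additive subgroups of `R`: all finite sums of products. -/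
def mulSub (A B : AddSubgroup R) : AddSubgroup R :=
  AddSubgroup.closure ((A : Set R) * (B : Set R))

/-- `R` is strongly graded: `R_g R_h = R_{g+h}` for all `g, h`. -/
def IsStronglyGraded (𝒜 : G → AddSubgroup R) : Prop :=
  ∀ g h : G, mulSub (𝒜 g) (𝒜 h) = 𝒜 (g + h)

/-- `C_R(R_e) = Z(R_e)` as subsets of `R`. -/
def CentralizerEqCenter (𝒜 : G → AddSubgroup R) : Prop :=
  {x : R | ∀ r ∈ 𝒜 0, x * r = r * x} = {x : R | x ∈ 𝒜 0 ∧ ∀ r ∈ 𝒜 0, x * r = r * x}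

/-- A two-sided ideal `I` is graded if each homogeneous component of each of its
elements again lies in `I` (equivalently, `I = ⊕_g (I ∩ R_g)`). -/
def IsGradedIdeal (𝒜 : G → AddSubgroup R) [GradedRing 𝒜] (I : TwoSidedIdeal R) : Prop :=
  ∀ x ∈ I, ∀ g : G, (DirectSum.decompose 𝒜 x g : R) ∈ I

/-- `R` is graded simple: the only graded two-sided ideals are `{0}` and `R`. -/
def IsGradedSimple (𝒜 : G → AddSubgroup R) [GradedRing 𝒜] : Prop :=
  ∀ I : TwoSidedIdeal R, IsGradedIdeal 𝒜 I → I = ⊥ ∨ I = ⊤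

end Controlled

/-!
Since `R_{{g}} = R_g`, conditions (a) and (b) are the singleton cases of controlledness; a
sub-bimodule `R_H ≤ R_g` has `H ⊆ {g}` by injectivity of `H ↦ R_H`.

Conversely, the point is that every sub-bimodule `P` is graded. If `x ∈ P` has two components
`g₁ ≠ g₂`, the `g₂`-components of `P ∩ R_T ∩ ker π_{g₁}` (`T` the support of `x`) form a
sub-bimodule of the simple `R_{g₂}`. If it is all of `R_{g₂}`, some `y ∈ P` has no
`g₁`-component and the same `g₂`-component as `x`, so `x = (x - y) + y` splits into elements of `P`
of smaller support, and we induct. If it is zero, `π_{g₁} y ↦ π_{g₂} y` is a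
well-defined nonzero bimodule map `R_{g₁} → R_{g₂}`, an isomorphism by Schur's lemma, contradicting
(b). Similarly an isomorphism `R_S ≅ R_T` followed by a projection gives, for each `g ∈ S`, a
nonzero map `R_g → R_h` with `h ∈ T`, so `g = h ∈ T`.
-/

open GradedRing

namespace Controlled

variable {G R : Type*} [Ring R] {𝒜 : G → AddSubgroup R}

lemma RH_empty : RH 𝒜 ∅ = ⊥ := by simp [RH]

lemma RH_singleton (g : G) : RH 𝒜 {g} = 𝒜 g := by simp [RH]

lemma RH_union (S T : Set G) : RH 𝒜 (S ∪ T) = RH 𝒜 S ⊔ RH 𝒜 T := iSup_union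

lemma RH_mono {S T : Set G} (h : S ⊆ T) : RH 𝒜 S ≤ RH 𝒜 T := biSup_mono h

lemma le_RH {H : Set G} {g : G} (hg : g ∈ H) : 𝒜 g ≤ RH 𝒜 H :=
  le_biSup 𝒜 hg

variable [AddGroup G]

lemma IsControlled.subset_of_RH_le (hc : IsControlled 𝒜) {S T : Set G}
    (hST : RH 𝒜 S ≤ RH 𝒜 T) : S ⊆ T :=
  Set.union_eq_right.mp <| hc.2.1 <| by rw [RH_union, sup_eq_right.mpr hST]

lemma IsControlled.isSimpleBimod (hc : IsControlled 𝒜) (g : G) : IsSimpleBimod 𝒜 (𝒜 g) := by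
  refine ⟨fun h => ?_, fun Q hQ hQsub => ?_⟩
  · have : ({g} : Set G) = ∅ := hc.2.1 (by rw [RH_singleton, RH_empty, h])
    exact Set.singleton_ne_empty g this
  · obtain ⟨H, rfl⟩ := hc.2.2.1 Q hQsub
    have hH : H ⊆ {g} := hc.subset_of_RH_le (by rwa [RH_singleton])
    rcases Set.subset_singleton_iff_eq.mp hH with rfl | rfl
    · exact Or.inl RH_empty
    · exact Or.inr (RH_singleton g)

lemma IsControlled.nonempty_bimodIso_iff (hc : IsControlled 𝒜) (g h : G) :
    Nonempty (BimodIso 𝒜 (𝒜 g) (𝒜 h)) ↔ g = h := by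
  simpa only [RH_singleton, Set.singleton_eq_singleton_iff] using hc.2.2.2 {g} {h}

variable (𝒜) in
def IsBimodHom {P Q : AddSubgroup R} (f : P →+ Q) : Prop :=
  (∀ a ∈ 𝒜 0, ∀ (x : P) (hax : a * x ∈ P), (f ⟨a * x, hax⟩ : R) = a * f x) ∧
  (∀ a ∈ 𝒜 0, ∀ (x : P) (hxa : x * a ∈ P), (f ⟨x * a, hxa⟩ : R) = f x * a)

lemma IsSubBimodule.inf {P Q : AddSubgroup R} (hP : IsSubBimodule 𝒜 P)
    (hQ : IsSubBimodule 𝒜 Q) : IsSubBimodule 𝒜 (P ⊓ Q) := fun a ha x hx =>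
  ⟨⟨(hP a ha x hx.1).1, (hQ a ha x hx.2).1⟩, ⟨(hP a ha x hx.1).2, (hQ a ha x hx.2).2⟩⟩

lemma IsBimodHom.isSubBimodule_ker {P Q : AddSubgroup R} (hP : IsSubBimodule 𝒜 P)
    {f : P →+ Q} (hf : IsBimodHom 𝒜 f) : IsSubBimodule 𝒜 (f.ker.map P.subtype) := by
  rintro a ha _ ⟨x, hx, rfl⟩
  have hx : f x = 0 := hx
  exact ⟨⟨⟨a * x, (hP a ha x x.2).1⟩, Subtype.ext (by simp [hf.1 a ha x, hx]), rfl⟩,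
    ⟨⟨x * a, (hP a ha x x.2).2⟩, Subtype.ext (by simp [hf.2 a ha x, hx]), rfl⟩⟩

lemma IsBimodHom.isSubBimodule_range {P Q : AddSubgroup R} (hP : IsSubBimodule 𝒜 P)
    {f : P →+ Q} (hf : IsBimodHom 𝒜 f) : IsSubBimodule 𝒜 (f.range.map Q.subtype) := by
  rintro a ha _ ⟨_, ⟨x, rfl⟩, rfl⟩
  exact ⟨⟨f ⟨a * x, (hP a ha x x.2).1⟩, ⟨_, rfl⟩, hf.1 a ha x _⟩,
    ⟨f ⟨x * a, (hP a ha x x.2).2⟩, ⟨_, rfl⟩, hf.2 a ha x _⟩⟩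

lemma IsBimodHom.injective {P Q : AddSubgroup R} (hP : IsSubBimodule 𝒜 P)
    (hPs : IsSimpleBimod 𝒜 P) {f : P →+ Q} (hf : IsBimodHom 𝒜 f) (hf0 : f ≠ 0) :
    Function.Injective f := by
  refine (injective_iff_map_eq_zero f).mpr fun x hx => ?_
  rcases hPs.2 _ (AddSubgroup.map_subtype_le _) (hf.isSubBimodule_ker hP) with h | h
  · have : (x : R) ∈ f.ker.map P.subtype := ⟨x, hx, rfl⟩
    rw [h] at this
    exact Subtype.ext this
  · refine absurd (AddMonoidHom.ext fun y => ?_) hf0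
    obtain ⟨z, hz, hzy⟩ : (y : R) ∈ f.ker.map P.subtype := h.symm ▸ y.2
    rw [← Subtype.ext hzy]
    exact hz

lemma IsBimodHom.surjective {P Q : AddSubgroup R} (hP : IsSubBimodule 𝒜 P)
    (hQs : IsSimpleBimod 𝒜 Q) {f : P →+ Q} (hf : IsBimodHom 𝒜 f) (hf0 : f ≠ 0) :
    Function.Surjective f := by
  rcases hQs.2 _ (AddSubgroup.map_subtype_le _) (hf.isSubBimodule_range hP) with h | h
  · refine absurd (AddMonoidHom.ext fun x => Subtype.ext ?_) hf0
    have : (f x : R) ∈ f.range.map Q.subtype := ⟨f x, ⟨x, rfl⟩, rfl⟩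
    rw [h] at this
    exact this
  · intro y
    obtain ⟨_, ⟨x, rfl⟩, hx⟩ : (y : R) ∈ f.range.map Q.subtype := h.symm ▸ y.2
    exact ⟨x, Subtype.ext hx⟩

noncomputable def BimodIso.ofBijective {P Q : AddSubgroup R} {f : P →+ Q}
    (hf : IsBimodHom 𝒜 f) (hbij : Function.Bijective f) : BimodIso 𝒜 P Q where
  toEquiv := AddEquiv.ofBijective f hbij
  map_left a x ha hx := hf.1 a ha ⟨x, hx⟩
  map_right a x ha hx := hf.2 a ha ⟨x, hx⟩

def BimodIso.refl (P : AddSubgroup R) : BimodIso 𝒜 P P :=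
  ⟨AddEquiv.refl P, fun _ _ _ _ _ => rfl, fun _ _ _ _ _ => rfl⟩

def BimodIso.symm {P Q : AddSubgroup R} (hP : IsSubBimodule 𝒜 P) (φ : BimodIso 𝒜 P Q) :
    BimodIso 𝒜 Q P where
  toEquiv := φ.toEquiv.symm
  map_left a x ha hx hax := by
    set u := φ.toEquiv.symm ⟨x, hx⟩ with hu
    have hau : a * u ∈ P := (hP a ha u u.2).1
    suffices φ.toEquiv.symm ⟨a * x, hax⟩ = ⟨a * u, hau⟩ by rw [this]
    rw [AddEquiv.symm_apply_eq]
    ext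
    rw [φ.map_left a u ha u.2 hau, hu, Subtype.coe_eta, AddEquiv.apply_symm_apply]
  map_right a x ha hx hxa := by
    set u := φ.toEquiv.symm ⟨x, hx⟩ with hu
    have hua : u * a ∈ P := (hP a ha u u.2).2
    suffices φ.toEquiv.symm ⟨x * a, hxa⟩ = ⟨u * a, hua⟩ by rw [this]
    rw [AddEquiv.symm_apply_eq]
    ext
    rw [φ.map_right a u ha u.2 hua, hu, Subtype.coe_eta, AddEquiv.apply_symm_apply]

section Graded

variable [DecidableEq G] [GradedRing 𝒜]

lemma proj_mem (g : G) (x : R) : proj 𝒜 g x ∈ 𝒜 g := SetLike.coe_mem _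

lemma proj_of_mem {g : G} {x : R} (hx : x ∈ 𝒜 g) : proj 𝒜 g x = x :=
  decompose_of_mem_same 𝒜 hx

lemma proj_of_mem_of_ne {g h : G} {x : R} (hx : x ∈ 𝒜 h) (hne : h ≠ g) : proj 𝒜 g x = 0 :=
  decompose_of_mem_ne 𝒜 hx hne

lemma proj_mul_left {a : R} (ha : a ∈ 𝒜 0) (g : G) (x : R) :
    proj 𝒜 g (a * x) = a * proj 𝒜 g x :=
  coe_decompose_mul_of_left_mem_zero 𝒜 ha

lemma proj_mul_right {a : R} (ha : a ∈ 𝒜 0) (g : G) (x : R) :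
    proj 𝒜 g (x * a) = proj 𝒜 g x * a :=
  coe_decompose_mul_of_right_mem_zero 𝒜 ha

lemma eq_zero_of_forall_proj_eq_zero {x : R} (h : ∀ g, proj 𝒜 g x = 0) : x = 0 :=
  (decompose 𝒜).injective <| by
    rw [decompose_zero]
    ext g
    exact h g

lemma mem_RH_iff {H : Set G} {x : R} : x ∈ RH 𝒜 H ↔ ∀ g ∉ H, proj 𝒜 g x = 0 := by
  classical
  refine ⟨fun hx g hg => ?_, fun hx => ?_⟩
  · have : RH 𝒜 H ≤ (proj 𝒜 g).ker :=
      iSup₂_le fun h hh _ hy => proj_of_mem_of_ne hy (ne_of_mem_of_not_mem hh hg)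
    exact this hx
  · rw [← sum_support_decompose 𝒜 x]
    refine sum_mem fun g _ => ?_
    by_cases hg : g ∈ H
    · exact le_RH hg (SetLike.coe_mem _)
    · rw [← proj_apply, hx g hg]
      exact zero_mem _

lemma exists_finset_mem_RH (x : R) : ∃ T : Finset G, x ∈ RH 𝒜 T := by
  classical
  refine ⟨(decompose 𝒜 x).support, mem_RH_iff.mpr fun g hg => ?_⟩
  by_contra h
  exact hg ((mem_support_iff 𝒜 x g).mpr h)

lemma mem_RH_diff_singleton {H : Set G} {x : R} (hx : x ∈ RH 𝒜 H) {g : G}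
    (hg : proj 𝒜 g x = 0) : x ∈ RH 𝒜 (H \ {g}) :=
  mem_RH_iff.mpr fun h hh => by
    by_cases hhg : h = g
    · rwa [hhg]
    · exact mem_RH_iff.mp hx h fun hhH => hh ⟨hhH, hhg⟩

lemma subset_of_RH_le (hne : ∀ g, 𝒜 g ≠ ⊥) {S T : Set G} (hST : RH 𝒜 S ≤ RH 𝒜 T) :
    S ⊆ T := by
  intro g hg
  by_contra hgT
  obtain ⟨x, hx, hx0⟩ := (𝒜 g).bot_or_exists_ne_zero.resolve_left (hne g)
  rw [← proj_of_mem hx] at hx0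
  exact hx0 (mem_RH_iff.mp (hST (le_RH hg hx)) g hgT)

lemma RH_injective (hne : ∀ g, 𝒜 g ≠ ⊥) : Function.Injective (RH 𝒜) := fun _ _ h =>
  (subset_of_RH_le hne h.le).antisymm (subset_of_RH_le hne h.ge)

lemma isSubBimodule_graded (g : G) : IsSubBimodule 𝒜 (𝒜 g) := fun _ ha _ hx =>
  ⟨by simpa using SetLike.mul_mem_graded ha hx, by simpa using SetLike.mul_mem_graded hx ha⟩

lemma isSubBimodule_RH (H : Set G) : IsSubBimodule 𝒜 (RH 𝒜 H) := fun a ha x hx =>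
  ⟨mem_RH_iff.mpr fun g hg => by rw [proj_mul_left ha, mem_RH_iff.mp hx g hg, mul_zero],
    mem_RH_iff.mpr fun g hg => by rw [proj_mul_right ha, mem_RH_iff.mp hx g hg, zero_mul]⟩

lemma isSubBimodule_ker_proj (g : G) : IsSubBimodule 𝒜 (proj 𝒜 g).ker := fun a ha x hx =>
  ⟨by simp [proj_mul_left ha, AddMonoidHom.mem_ker.mp hx],
    by simp [proj_mul_right ha, AddMonoidHom.mem_ker.mp hx]⟩

variable (𝒜) in
def projOn (M : AddSubgroup R) (g : G) : M →+ 𝒜 g :=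
  ((proj 𝒜 g).comp M.subtype).codRestrict (𝒜 g) fun x => proj_mem g (x : R)

lemma isBimodHom_projOn (M : AddSubgroup R) (g : G) : IsBimodHom 𝒜 (projOn 𝒜 M g) :=
  ⟨fun _ ha x _ => proj_mul_left ha g x, fun _ ha x _ => proj_mul_right ha g x⟩

lemma eq_of_isBimodHom_of_ne_zero (hsimple : ∀ g, IsSimpleBimod 𝒜 (𝒜 g))
    (hiso : ∀ g h, Nonempty (BimodIso 𝒜 (𝒜 g) (𝒜 h)) → g = h) {g h : G} {f : 𝒜 g →+ 𝒜 h}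
    (hf : IsBimodHom 𝒜 f) (hf0 : f ≠ 0) : g = h :=
  hiso g h ⟨.ofBijective hf ⟨hf.injective (isSubBimodule_graded g) (hsimple g) hf0,
    hf.surjective (isSubBimodule_graded g) (hsimple h) hf0⟩⟩

lemma exists_isBimodHom_ne_zero_of_ker_proj_le (hsimple : ∀ g, IsSimpleBimod 𝒜 (𝒜 g))
    {M : AddSubgroup R} (hM : IsSubBimodule 𝒜 M) {g₁ g₂ : G}
    (hker : ∀ y ∈ M, proj 𝒜 g₁ y = 0 → proj 𝒜 g₂ y = 0) {x : R} (hx : x ∈ M)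
    (hx₂ : proj 𝒜 g₂ x ≠ 0) : ∃ f : 𝒜 g₁ →+ 𝒜 g₂, IsBimodHom 𝒜 f ∧ f ≠ 0 := by
  set φ₁ := projOn 𝒜 M g₁
  set φ₂ := projOn 𝒜 M g₂
  have hφ₁x : φ₁ ⟨x, hx⟩ ≠ 0 := fun h => hx₂ (hker x hx (congrArg Subtype.val h))
  have hsurj : Function.Surjective φ₁ :=
    (isBimodHom_projOn M g₁).surjective hM (hsimple g₁) fun h => hφ₁x (by simp [φ₁, h])
  have hker' : φ₁.ker ≤ φ₂.ker := fun y hy =>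
    Subtype.ext (hker y y.2 (congrArg Subtype.val (AddMonoidHom.mem_ker.mp hy)))
  -- `f` is induced by `φ₂` on the quotient `M / ker φ₁ ≅ 𝒜 g₁`
  set f := φ₁.liftOfSurjective hsurj ⟨φ₂, hker'⟩
  have hf : ∀ y, f (φ₁ y) = φ₂ y := φ₁.liftOfRightInverse_comp_apply _ _ ⟨φ₂, hker'⟩
  refine ⟨f, ⟨fun a ha r har => ?_, fun a ha r hra => ?_⟩, fun h => hx₂ ?_⟩
  · obtain ⟨y, rfl⟩ := hsurj r
    have : (⟨a * φ₁ y, har⟩ : 𝒜 g₁) = φ₁ ⟨a * y, (hM a ha y y.2).1⟩ :=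
      Subtype.ext (proj_mul_left ha g₁ y).symm
    rw [this, hf, hf]
    exact proj_mul_left ha g₂ y
  · obtain ⟨y, rfl⟩ := hsurj r
    have : (⟨φ₁ y * a, hra⟩ : 𝒜 g₁) = φ₁ ⟨y * a, (hM a ha y y.2).2⟩ :=
      Subtype.ext (proj_mul_right ha g₁ y).symm
    rw [this, hf, hf]
    exact proj_mul_right ha g₂ y
  · have := hf ⟨x, hx⟩
    rw [h] at this
    exact congrArg Subtype.val this.symm

lemma exists_mem_proj_eq_zero_and_proj_eq (hsimple : ∀ g, IsSimpleBimod 𝒜 (𝒜 g))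
    (hiso : ∀ g h, Nonempty (BimodIso 𝒜 (𝒜 g) (𝒜 h)) → g = h) {M : AddSubgroup R}
    (hM : IsSubBimodule 𝒜 M) {g₁ g₂ : G} (hne : g₁ ≠ g₂) {x : R} (hx : x ∈ M) :
    ∃ y ∈ M, proj 𝒜 g₁ y = 0 ∧ proj 𝒜 g₂ y = proj 𝒜 g₂ x := by
  set K := M ⊓ (proj 𝒜 g₁).ker
  have hK : IsSubBimodule 𝒜 K := hM.inf (isSubBimodule_ker_proj g₁)
  rcases (hsimple g₂).2 _ (AddSubgroup.map_subtype_le _)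
      ((isBimodHom_projOn K g₂).isSubBimodule_range hK) with h | h
  · by_cases hx₂ : proj 𝒜 g₂ x = 0
    · exact ⟨0, zero_mem M, map_zero _, by rw [map_zero, hx₂]⟩
    have hker : ∀ y ∈ M, proj 𝒜 g₁ y = 0 → proj 𝒜 g₂ y = 0 := fun y hy hy₁ => by
      have : proj 𝒜 g₂ y ∈ ((projOn 𝒜 K g₂).range.map (𝒜 g₂).subtype) :=
        ⟨_, ⟨⟨y, hy, hy₁⟩, rfl⟩, rfl⟩
      rwa [h] at this
    obtain ⟨f, hf, hf0⟩ := exists_isBimodHom_ne_zero_of_ker_proj_le hsimple hM hker hx hx₂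
    exact absurd (eq_of_isBimodHom_of_ne_zero hsimple hiso hf hf0) hne
  · obtain ⟨_, ⟨⟨y, hyM, hy₁⟩, rfl⟩, hy₂⟩ :
        proj 𝒜 g₂ x ∈ ((projOn 𝒜 K g₂).range.map (𝒜 g₂).subtype) :=
      h.symm ▸ proj_mem g₂ x
    exact ⟨y, hyM, hy₁, hy₂⟩

lemma proj_mem_of_isSubBimodule (hsimple : ∀ g, IsSimpleBimod 𝒜 (𝒜 g))
    (hiso : ∀ g h, Nonempty (BimodIso 𝒜 (𝒜 g) (𝒜 h)) → g = h) {P : AddSubgroup R}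
    (hP : IsSubBimodule 𝒜 P) {x : R} (hx : x ∈ P) (g : G) : proj 𝒜 g x ∈ P := by
  obtain ⟨T, hxT⟩ := exists_finset_mem_RH (𝒜 := 𝒜) x
  induction T using Finset.strongInduction generalizing x with
  | H T ih =>
    by_cases hT : (T : Set G).Nontrivial
    · obtain ⟨g₁, hg₁, g₂, hg₂, hne⟩ := hT
      have hxPT : x ∈ P ⊓ RH 𝒜 T := ⟨hx, hxT⟩
      obtain ⟨y, ⟨hyP, hyT⟩, hy₁, hy₂⟩ := exists_mem_proj_eq_zero_and_proj_eq hsimple hiso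
        (hP.inf (isSubBimodule_RH (T : Set G))) hne hxPT
      have hy : proj 𝒜 g y ∈ P := ih _ (Finset.erase_ssubset hg₁) hyP <| by
        rw [Finset.coe_erase]
        exact mem_RH_diff_singleton hyT hy₁
      have hxy : proj 𝒜 g (x - y) ∈ P := ih _ (Finset.erase_ssubset hg₂) (sub_mem hx hyP) <| by
        rw [Finset.coe_erase]
        exact mem_RH_diff_singleton (sub_mem hxT hyT) (by rw [map_sub, hy₂, sub_self])
      simpa using add_mem hxy hy
    · by_cases hg : g ∈ T
      · have hTg : (T : Set G) ⊆ {g} := fun h hh => Set.not_nontrivial_iff.mp hT hh hg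
        have hxg : x ∈ 𝒜 g := RH_singleton (𝒜 := 𝒜) g ▸ RH_mono hTg hxT
        rwa [proj_of_mem hxg]
      · rw [mem_RH_iff.mp hxT g hg]
        exact zero_mem P

lemma exists_RH_eq (hsimple : ∀ g, IsSimpleBimod 𝒜 (𝒜 g))
    (hiso : ∀ g h, Nonempty (BimodIso 𝒜 (𝒜 g) (𝒜 h)) → g = h) {P : AddSubgroup R}
    (hP : IsSubBimodule 𝒜 P) : ∃ H : Set G, RH 𝒜 H = P := by
  refine ⟨{g | 𝒜 g ≤ P}, le_antisymm (iSup₂_le fun g hg => hg) fun x hx => ?_⟩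
  refine mem_RH_iff.mpr fun g hg => ?_
  rcases (hsimple g).2 (𝒜 g ⊓ P) inf_le_left ((isSubBimodule_graded g).inf hP) with h | h
  · have : proj 𝒜 g x ∈ 𝒜 g ⊓ P :=
      ⟨proj_mem g x, proj_mem_of_isSubBimodule hsimple hiso hP hx g⟩
    rwa [h] at this
  · exact absurd (h ▸ inf_le_right : 𝒜 g ≤ P) hg

lemma subset_of_bimodIso (hsimple : ∀ g, IsSimpleBimod 𝒜 (𝒜 g))
    (hiso : ∀ g h, Nonempty (BimodIso 𝒜 (𝒜 g) (𝒜 h)) → g = h) {S T : Set G}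
    (φ : BimodIso 𝒜 (RH 𝒜 S) (RH 𝒜 T)) : S ⊆ T := by
  intro g hg
  obtain ⟨x, hx, hx0⟩ := (𝒜 g).bot_or_exists_ne_zero.resolve_left (hsimple g).1
  set ι := AddSubgroup.inclusion (le_RH (𝒜 := 𝒜) hg)
  set y := φ.toEquiv (ι ⟨x, hx⟩)
  have hy0 : (y : R) ≠ 0 := by
    rw [ne_eq, ZeroMemClass.coe_eq_zero, AddEquiv.map_eq_zero_iff]
    exact fun h0 => hx0 (congrArg Subtype.val h0)
  obtain ⟨h, hh⟩ : ∃ h, proj 𝒜 h y ≠ 0 := by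
    by_contra! hall
    exact hy0 (eq_zero_of_forall_proj_eq_zero hall)
  have hhT : h ∈ T := by
    by_contra hhT
    exact hh (mem_RH_iff.mp y.2 h hhT)
  set f : 𝒜 g →+ 𝒜 h := (projOn 𝒜 (RH 𝒜 T) h).comp (φ.toEquiv.toAddMonoidHom.comp ι)
  have hf : IsBimodHom 𝒜 f := by
    refine ⟨fun a ha r har => ?_, fun a ha r hra => ?_⟩
    · show proj 𝒜 h (φ.toEquiv ⟨a * r, le_RH hg har⟩) =
        a * proj 𝒜 h (φ.toEquiv ⟨r, le_RH hg r.2⟩)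
      rw [φ.map_left a r ha (le_RH hg r.2), proj_mul_left ha]
    · show proj 𝒜 h (φ.toEquiv ⟨r * a, le_RH hg hra⟩) =
        proj 𝒜 h (φ.toEquiv ⟨r, le_RH hg r.2⟩) * a
      rw [φ.map_right a r ha (le_RH hg r.2), proj_mul_right ha]
  have hf0 : f ≠ 0 := fun h0 => hh (congrArg Subtype.val (DFunLike.congr_fun h0 ⟨x, hx⟩) :)
  rwa [eq_of_isBimodHom_of_ne_zero hsimple hiso hf hf0]

theorem isControlled_of (hsimple : ∀ g, IsSimpleBimod 𝒜 (𝒜 g))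
    (hiso : ∀ g h, Nonempty (BimodIso 𝒜 (𝒜 g) (𝒜 h)) → g = h) : IsControlled 𝒜 := by
  refine ⟨isSubBimodule_RH, RH_injective fun g => (hsimple g).1,
    fun P hP => exists_RH_eq hsimple hiso hP, fun S T => ⟨fun ⟨φ⟩ => ?_, ?_⟩⟩
  · exact (subset_of_bimodIso hsimple hiso φ).antisymm
      (subset_of_bimodIso hsimple hiso (φ.symm (isSubBimodule_RH S)))
  · rintro rfl
    exact ⟨.refl _⟩

end Graded

end Controlled

variable {G R : Type*} [AddGroup G] [DecidableEq G] [Ring R]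

/-- `R` is `G`-controlled iff (a) each `R_g` is a simple `R_e`-bimodule and
(b) `R_g ≅ R_h` iff `g = h`. -/
theorem stmt9 (𝒜 : G → AddSubgroup R) [GradedRing 𝒜] :
    Controlled.IsControlled 𝒜 ↔
      ((∀ g : G, Controlled.IsSimpleBimod 𝒜 (𝒜 g)) ∧
        (∀ g h : G, Nonempty (Controlled.BimodIso 𝒜 (𝒜 g) (𝒜 h)) ↔ g = h)) :=
  ⟨fun hc => ⟨hc.isSimpleBimod, hc.nonempty_bimodIso_iff⟩,
    fun ⟨hsimple, hiso⟩ => Controlled.isControlled_of hsimple fun g h => (hiso g h).1⟩
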